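/- arXiv:quant-ph/0301025 — 5 statements merged into one kernel-verified Lean document; each statement's English description precedes it below -/
import Mathlib

section
/- Let X₁ ≠ X₂ be vectors in 𝔽₂ⁿ and let f : 𝔽₂ⁿ → 𝔽₂ satisfy the promise that for every q ∈ 𝔽₂ⁿ, f(q) = q·X₁ or f(q) = q·X₂. Then C_{X₁}(f) + C_{X₂}(f) = N, where N = 2ⁿ. -/
/-!
Writing `C_j(f) = ∑_q ±1` with sign `+` exactly when `j·q = f q`, the promise forces the two signs
at `q` to cancel when `X₁·q ≠ X₂·q` and to add up to `2` when `X₁·q = X₂·q`. So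
`C_{X₁}(f) + C_{X₂}(f)` is twice the size of the kernel of the nonzero functional
`q ↦ (X₁ - X₂)·q`, which has index `2`.
-/

/-- The inner product of two vectors in `𝔽₂ⁿ`. -/
def dotp {n : ℕ} (q X : Fin n → ZMod 2) : ZMod 2 := ∑ i, q i * X i

/-- The Deutsch–Jozsa coefficient `C_j(f) = #{q : j·q = f q} − #{q : j·q ≠ f q}`. -/
def coefC {n : ℕ} (f : (Fin n → ZMod 2) → ZMod 2) (j : Fin n → ZMod 2) : ℤ :=
  ((Finset.univ.filter (fun q : Fin n → ZMod 2 => dotp j q = f q)).card : ℤ) -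
  ((Finset.univ.filter (fun q : Fin n → ZMod 2 => dotp j q ≠ f q)).card : ℤ)

open Finset Matrix

theorem AddMonoidHom.card_ker_mul_card_of_surjective {G H : Type*} [AddGroup G] [AddGroup H]
    (φ : G →+ H) (hφ : Function.Surjective φ) : Nat.card φ.ker * Nat.card H = Nat.card G := by
  rw [← φ.ker.card_mul_index, AddSubgroup.index_ker, φ.range_eq_top_of_surjective hφ,
    AddSubgroup.card_top]

theorem dotProduct_left_surjective {ι K : Type*} [Fintype ι] [DecidableEq ι] [DivisionRing K]
    {Y : ι → K} (hY : Y ≠ 0) : Function.Surjective (Y ⬝ᵥ ·) := by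
  obtain ⟨i, hi⟩ := Function.ne_iff.mp hY
  exact fun c => ⟨Pi.single i ((Y i)⁻¹ * c), by simp [dotProduct_single, mul_inv_cancel_left₀ hi]⟩

theorem card_filter_dotProduct_eq_zero_mul_card {ι K : Type*} [Fintype ι] [DecidableEq ι]
    [DivisionRing K] [Fintype K] [DecidableEq K] {Y : ι → K} (hY : Y ≠ 0) :
    #{q : ι → K | Y ⬝ᵥ q = 0} * Fintype.card K = Fintype.card K ^ Fintype.card ι := by
  let φ : (ι → K) →+ K := AddMonoidHom.mk' (Y ⬝ᵥ ·) (dotProduct_add Y)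
  have h := φ.card_ker_mul_card_of_surjective (dotProduct_left_surjective hY)
  rw [Nat.card_fun, Nat.card_eq_fintype_card (α := K), Nat.card_eq_fintype_card (α := ι)] at h
  rw [← h, ← Fintype.card_subtype, ← Nat.card_eq_fintype_card]
  rfl

theorem ite_eq_add_ite_eq_of_eq_or_eq {α : Type*} [DecidableEq α] {a b c : α}
    (hc : c = a ∨ c = b) :
    ((if a = c then 1 else -1) + (if b = c then 1 else -1) : ℤ) = if a = b then 2 else 0 := by
  rcases hc with rfl | rfl
  · by_cases h : b = c <;> simp [h, eq_comm]
  · by_cases h : a = c <;> simp [h]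

theorem dotp_eq_dotProduct {n : ℕ} (q X : Fin n → ZMod 2) : dotp q X = q ⬝ᵥ X := rfl

theorem coefC_eq_sum_ite {n : ℕ} (f : (Fin n → ZMod 2) → ZMod 2) (j : Fin n → ZMod 2) :
    coefC f j = ∑ q, if dotp j q = f q then 1 else -1 := by
  simp [coefC, sum_ite, sub_eq_add_neg]

theorem card_filter_dotp_eq_mul_two {n : ℕ} {X₁ X₂ : Fin n → ZMod 2} (hX : X₁ ≠ X₂) :
    #{q | dotp X₁ q = dotp X₂ q} * 2 = 2 ^ n := by
  have hfilter : #{q | dotp X₁ q = dotp X₂ q} = #{q | (X₁ - X₂) ⬝ᵥ q = 0} :=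
    congrArg card <| filter_congr fun q _ => by
      rw [dotp_eq_dotProduct, dotp_eq_dotProduct, sub_dotProduct, sub_eq_zero]
  rw [hfilter]
  simpa only [ZMod.card, Fintype.card_fin] using
    card_filter_dotProduct_eq_zero_mul_card (sub_ne_zero.mpr hX)

/-- If `f` satisfies the two-secret promise for distinct `X₁ ≠ X₂`, then
`C_{X₁}(f) + C_{X₂}(f) = N` with `N = 2ⁿ`. -/
theorem coefC_add_eq_N {n : ℕ} (X₁ X₂ : Fin n → ZMod 2) (hX : X₁ ≠ X₂)
    (f : (Fin n → ZMod 2) → ZMod 2)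
    (hf : ∀ q, f q = dotp q X₁ ∨ f q = dotp q X₂) :
    coefC f X₁ + coefC f X₂ = 2 ^ n := by
  calc coefC f X₁ + coefC f X₂
      = ∑ q, if dotp X₁ q = dotp X₂ q then 2 else 0 := by
        rw [coefC_eq_sum_ite, coefC_eq_sum_ite, ← sum_add_distrib]
        refine sum_congr rfl fun q _ => ite_eq_add_ite_eq_of_eq_or_eq ?_
        simpa only [dotp_eq_dotProduct, dotProduct_comm q] using hf q
    _ = #{q | dotp X₁ q = dotp X₂ q} * 2 := by
        rw [sum_ite, sum_const_zero, sum_const, add_zero, nsmul_eq_mul]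
    _ = 2 ^ n := by exact_mod_cast card_filter_dotp_eq_mul_two hX
end

section
/- Let X₁ ≠ X₂ be vectors in 𝔽₂ⁿ and let f : 𝔽₂ⁿ → 𝔽₂ satisfy the promise that for every q ∈ 𝔽₂ⁿ, f(q) = q·X₁ or f(q) = q·X₂. Then for every X ∈ 𝔽₂ⁿ with X ∉ {X₁, X₂} and for i = 1, 2, one has C_{X_i}(f) ≥ |C_X(f)|. -/
namespace DJaux

open Finset

variable {n : ℕ}

lemma dotp_comm (q X : Fin n → ZMod 2) : dotp q X = dotp X q :=
  Finset.sum_congr rfl fun i _ => mul_comm _ _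

lemma dotp_add_left (a b q : Fin n → ZMod 2) :
    dotp (a + b) q = dotp a q + dotp b q := by
  unfold dotp
  rw [← Finset.sum_add_distrib]
  exact Finset.sum_congr rfl fun i _ => by simp [add_mul]

lemma dotp_add_right (a b q : Fin n → ZMod 2) :
    dotp q (a + b) = dotp q a + dotp q b := by
  rw [dotp_comm, dotp_add_left, dotp_comm a, dotp_comm b]

lemma coefC_eq_sum (f : (Fin n → ZMod 2) → ZMod 2) (j : Fin n → ZMod 2) :
    coefC f j = ∑ q : Fin n → ZMod 2, (if dotp j q = f q then (1:ℤ) else -1) := by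
  rw [Finset.sum_ite, Finset.sum_const, Finset.sum_const]
  simp [coefC, sub_eq_add_neg]

lemma exists_u (Y : Fin n → ZMod 2) (hY : Y ≠ 0) : ∃ u, dotp Y u = 1 := by
  obtain ⟨i, hi⟩ := Function.ne_iff.mp hY
  refine ⟨Pi.single i 1, ?_⟩
  have h1 : Y i = 1 := by
    have h : ∀ a : ZMod 2, a ≠ 0 → a = 1 := by decide
    exact h _ hi
  have hpt : ∀ j, Y j * (Pi.single i 1 : Fin n → ZMod 2) j = if j = i then Y i else 0 := by
    intro j
    by_cases h : j = i <;> simp [Pi.single_apply, h]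
  rw [dotp, Finset.sum_congr rfl (fun j _ => hpt j), Finset.sum_ite_eq' Finset.univ i]
  simp [h1]

lemma add_add_cancel (u : Fin n → ZMod 2) (v : Fin n → ZMod 2) : v + u + u = v := by
  funext j
  have h : ∀ a b : ZMod 2, a + b + b = a := by decide
  exact h _ _

lemma card_fiber_eq (Y : Fin n → ZMod 2) (hY : Y ≠ 0) :
    (Finset.univ.filter (fun q : Fin n → ZMod 2 => dotp Y q = 0)).card =
    (Finset.univ.filter (fun q : Fin n → ZMod 2 => dotp Y q ≠ 0)).card := by
  obtain ⟨u, hu⟩ := exists_u Y hY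
  refine Finset.card_nbij' (fun q => q + u) (fun q => q + u) ?_ ?_ ?_ ?_
  · intro q hq
    simp only [Finset.mem_coe, Finset.mem_filter, Finset.mem_univ, true_and] at hq ⊢
    rw [dotp_add_right, hq, hu]
    decide
  · intro q hq
    simp only [Finset.mem_coe, Finset.mem_filter, Finset.mem_univ, true_and] at hq ⊢
    rw [dotp_add_right, hu]
    have h : ∀ a : ZMod 2, a ≠ 0 → a + 1 = 0 := by decide
    exact h _ hq
  · intro q _; exact add_add_cancel u q
  · intro q _; exact add_add_cancel u q

lemma sum_chi (Y : Fin n → ZMod 2) (hY : Y ≠ 0) :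
    ∑ q : Fin n → ZMod 2, (if dotp Y q = 0 then (1:ℤ) else -1) = 0 := by
  rw [Finset.sum_ite, Finset.sum_const, Finset.sum_const, card_fiber_eq Y hY]
  simp

lemma pt_decomp (a y b : ZMod 2) :
    (if a + y = b then (1:ℤ) else -1) =
    (if y = 0 then (1:ℤ) else -1)
      - 2 * (if a ≠ b then (if y = 0 then (1:ℤ) else -1) else 0) := by
  fin_cases a <;> fin_cases y <;> fin_cases b <;> decide

lemma key (X₁ X₂ : Fin n → ZMod 2) (hX : X₁ ≠ X₂)
    (f : (Fin n → ZMod 2) → ZMod 2)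
    (hf : ∀ q, f q = dotp q X₁ ∨ f q = dotp q X₂)
    (X : Fin n → ZMod 2) (hX₁ : X ≠ X₁) :
    coefC f X₂ ≥ |coefC f X| := by
  classical
  have hfe : ∀ q, f q = dotp X₁ q ∨ f q = dotp X₂ q := by
    intro q
    rcases hf q with h | h
    · left; rw [h, dotp_comm]
    · right; rw [h, dotp_comm]
  set B₁ := Finset.univ.filter (fun q : Fin n → ZMod 2 => dotp X₁ q ≠ f q) with hB₁
  set B₂ := Finset.univ.filter (fun q : Fin n → ZMod 2 => dotp X₂ q ≠ f q) with hB₂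
  set D := X₁ + X₂ with hD
  have hDne : D ≠ 0 := by
    intro h
    apply hX
    funext j
    have hj : X₁ j + X₂ j = 0 := congrFun h j
    have h2 : ∀ a b : ZMod 2, a + b = 0 → a = b := by decide
    exact h2 _ _ hj
  set S₁ := Finset.univ.filter (fun q : Fin n → ZMod 2 => dotp D q ≠ 0) with hS₁
  have hmem : ∀ q, dotp D q ≠ 0 ↔ dotp X₁ q ≠ dotp X₂ q := by
    intro q
    rw [hD, dotp_add_left]
    have h2 : ∀ a b : ZMod 2, a + b ≠ 0 ↔ a ≠ b := by decide
    exact h2 _ _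
  have hS_union : S₁ = B₁ ∪ B₂ := by
    ext q
    simp only [hS₁, hB₁, hB₂, Finset.mem_filter, Finset.mem_union, Finset.mem_univ, true_and]
    rw [hmem q]
    rcases hfe q with h | h <;> rw [h] <;> constructor
    · exact fun hab => Or.inr hab.symm
    · rintro (hh | hh)
      · exact absurd rfl hh
      · exact hh.symm
    · exact fun hab => Or.inl hab
    · rintro (hh | hh)
      · exact hh
      · exact absurd rfl hh
  have hdisj : Disjoint B₁ B₂ := by
    rw [Finset.disjoint_left]
    intro q h1 h2
    simp only [hB₁, hB₂, Finset.mem_filter, Finset.mem_univ, true_and] at h1 h2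
    rcases hfe q with h | h
    · exact h1 h.symm
    · exact h2 h.symm
  have hcardS : (S₁.card : ℤ) = (B₁.card : ℤ) + (B₂.card : ℤ) := by
    rw [hS_union, Finset.card_union_of_disjoint hdisj]
    push_cast
    ring
  have huniv : ((Finset.univ : Finset (Fin n → ZMod 2)).card : ℤ) = 2 * (S₁.card : ℤ) := by
    have h := Finset.card_filter_add_card_filter_not
      (s := (Finset.univ : Finset (Fin n → ZMod 2))) (p := fun q => dotp D q = 0)
    rw [card_fiber_eq D hDne] at h
    have : (Finset.univ.filter (fun q : Fin n → ZMod 2 => ¬ dotp D q = 0)) = S₁ := rfl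
    rw [this] at h
    omega
  have hcoef2 : coefC f X₂ = 2 * (B₁.card : ℤ) := by
    have h := Finset.card_filter_add_card_filter_not
      (s := (Finset.univ : Finset (Fin n → ZMod 2))) (p := fun q => dotp X₂ q = f q)
    have h' : ((Finset.univ.filter (fun q : Fin n → ZMod 2 => dotp X₂ q = f q)).card : ℤ)
        + (B₂.card : ℤ) = ((Finset.univ : Finset (Fin n → ZMod 2)).card : ℤ) := by
      rw [hB₂]; exact_mod_cast h
    rw [coefC, ← hB₂]
    omega
  -- the analytic bound
  set Y := X + X₁ with hY
  have hYne : Y ≠ 0 := by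
    intro h
    apply hX₁
    funext j
    have hj : X j + X₁ j = 0 := congrFun h j
    have h2 : ∀ a b : ZMod 2, a + b = 0 → a = b := by decide
    exact h2 _ _ hj
  have hXq : ∀ q, dotp X q = dotp X₁ q + dotp Y q := by
    intro q
    rw [hY, dotp_add_left]
    have h2 : ∀ a b : ZMod 2, a = b + (a + b) := by decide
    exact h2 _ _
  have hsum : coefC f X = -2 * ∑ q ∈ B₁, (if dotp Y q = 0 then (1:ℤ) else -1) := by
    rw [coefC_eq_sum]
    have hpt : ∀ q : Fin n → ZMod 2, (if dotp X q = f q then (1:ℤ) else -1) =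
        (if dotp Y q = 0 then (1:ℤ) else -1)
          - 2 * (if dotp X₁ q ≠ f q then (if dotp Y q = 0 then (1:ℤ) else -1) else 0) := by
      intro q
      rw [hXq q]
      exact pt_decomp _ _ _
    rw [Finset.sum_congr rfl (fun q _ => hpt q), Finset.sum_sub_distrib, sum_chi Y hYne,
      ← Finset.mul_sum, ← Finset.sum_filter]
    rw [hB₁]
    ring
  have habs : |∑ q ∈ B₁, (if dotp Y q = 0 then (1:ℤ) else -1)| ≤ (B₁.card : ℤ) := by
    calc |∑ q ∈ B₁, (if dotp Y q = 0 then (1:ℤ) else -1)|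
        ≤ ∑ q ∈ B₁, |if dotp Y q = 0 then (1:ℤ) else -1| := Finset.abs_sum_le_sum_abs _ _
      _ = ∑ q ∈ B₁, 1 := by
          refine Finset.sum_congr rfl fun q _ => ?_
          split <;> norm_num
      _ = (B₁.card : ℤ) := by simp
  rw [hcoef2, hsum, abs_mul]
  have : |(-2 : ℤ)| = 2 := by norm_num
  rw [this]
  linarith [habs]

end DJaux

/-- If `f` satisfies the two-secret promise for distinct `X₁ ≠ X₂`, then for every
`X ∉ {X₁, X₂}` one has `C_{Xᵢ}(f) ≥ |C_X(f)|` for `i = 1, 2`. -/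
theorem coefC_secret_ge_abs {n : ℕ} (X₁ X₂ : Fin n → ZMod 2) (hX : X₁ ≠ X₂)
    (f : (Fin n → ZMod 2) → ZMod 2)
    (hf : ∀ q, f q = dotp q X₁ ∨ f q = dotp q X₂)
    (X : Fin n → ZMod 2) (hX₁ : X ≠ X₁) (hX₂ : X ≠ X₂) :
    coefC f X₁ ≥ |coefC f X| ∧ coefC f X₂ ≥ |coefC f X| := by
  exact ⟨DJaux.key X₂ X₁ hX.symm f (fun q => (hf q).symm) X hX₂,
         DJaux.key X₁ X₂ hX f hf X hX₁⟩
end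

section
/- (Minority-rule failure for k = 3) Let X₁, X₂, X₃ be pairwise distinct vectors in 𝔽₂ⁿ and define f : 𝔽₂ⁿ → 𝔽₂ by the minority rule f(q) = q·X₁ + q·X₂ + q·X₃ (sum in 𝔽₂). Then C_{X₁}(f) = C_{X₂}(f) = C_{X₃}(f) = 0, i.e., the Deutsch–Jozsa algorithm never outputs any of the three correct objects. -/
lemma dotp_comm {n : ℕ} (q X : Fin n → ZMod 2) : dotp q X = dotp X q := by
  simp [dotp, mul_comm]

lemma dotp_balanced {n : ℕ} (v : Fin n → ZMod 2) (hv : v ≠ 0) :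
    (Finset.univ.filter (fun q : Fin n → ZMod 2 => dotp q v = 0)).card
      = (Finset.univ.filter (fun q : Fin n → ZMod 2 => dotp q v ≠ 0)).card := by
  obtain ⟨i, hi⟩ : ∃ i, v i ≠ 0 := by
    by_contra h; push_neg at h; exact hv (funext fun j => h j)
  have hvi : v i = 1 := by revert hi; generalize v i = x; revert x; decide
  set e : Fin n → ZMod 2 := fun j => if j = i then 1 else 0 with he
  have hdot : ∀ q : Fin n → ZMod 2, dotp (q + e) v = dotp q v + 1 := by
    intro q
    simp [dotp, he, add_mul, Finset.sum_add_distrib, ite_mul, hvi]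
  have hinv : ∀ q : Fin n → ZMod 2, q + e + e = q := by
    intro q; funext j
    simp only [Pi.add_apply, add_assoc]
    have : e j + e j = 0 := by revert he; generalize e j = x; intro; revert x; decide
    simp [this]
  apply Finset.card_nbij' (fun q => q + e) (fun q => q + e)
  · intro q hq
    simp only [Finset.mem_coe, Finset.mem_filter, Finset.mem_univ, true_and] at hq ⊢
    rw [hdot, hq]; decide
  · intro q hq
    simp only [Finset.mem_coe, Finset.mem_filter, Finset.mem_univ, true_and] at hq ⊢
    rw [hdot]
    revert hq; generalize dotp q v = x; revert x; decide
  · intro q _; exact hinv q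
  · intro q _; exact hinv q

lemma coefC_zero_of_ne {n : ℕ} (f : (Fin n → ZMod 2) → ZMod 2) (j v : Fin n → ZMod 2)
    (hv : v ≠ 0) (h : ∀ q, (dotp j q = f q ↔ dotp q v = 0)) : coefC f j = 0 := by
  unfold coefC
  rw [sub_eq_zero]
  norm_cast
  have h1 : Finset.univ.filter (fun q : Fin n → ZMod 2 => dotp j q = f q)
      = Finset.univ.filter (fun q : Fin n → ZMod 2 => dotp q v = 0) :=
    Finset.filter_congr (fun q _ => by simp only [h q])
  have h2 : Finset.univ.filter (fun q : Fin n → ZMod 2 => dotp j q ≠ f q)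
      = Finset.univ.filter (fun q : Fin n → ZMod 2 => dotp q v ≠ 0) :=
    Finset.filter_congr (fun q _ => by simp only [ne_eq, h q])
  rw [h1, h2]
  exact dotp_balanced v hv

lemma add_ne_zero_of_ne {n : ℕ} {a b : Fin n → ZMod 2} (h : a ≠ b) : a + b ≠ 0 := by
  intro h0
  apply h
  funext j
  have := congrFun h0 j
  simp only [Pi.add_apply, Pi.zero_apply] at this
  revert this; generalize a j = x; generalize b j = y; revert x y; decide

lemma dotp_add {n : ℕ} (q a b : Fin n → ZMod 2) :
    dotp q (a + b) = dotp q a + dotp q b := by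
  simp [dotp, mul_add, Finset.sum_add_distrib]

/-- **Minority-rule failure for `k = 3`.** If `X₁, X₂, X₃` are pairwise distinct and
`f(q) = q·X₁ + q·X₂ + q·X₃` (in `𝔽₂`), then `C_{Xᵢ}(f) = 0` for `i = 1, 2, 3`. -/
theorem minority_rule_failure {n : ℕ} (X₁ X₂ X₃ : Fin n → ZMod 2)
    (h12 : X₁ ≠ X₂) (h13 : X₁ ≠ X₃) (h23 : X₂ ≠ X₃)
    (f : (Fin n → ZMod 2) → ZMod 2)
    (hf : ∀ q, f q = dotp q X₁ + dotp q X₂ + dotp q X₃) :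
    coefC f X₁ = 0 ∧ coefC f X₂ = 0 ∧ coefC f X₃ = 0 := by
  have key : ∀ a b : ZMod 2, ∀ x y z : ZMod 2,
      (a = x + y + z ↔ b = 0) → True := fun _ _ _ _ _ _ => trivial
  refine ⟨coefC_zero_of_ne f X₁ (X₂ + X₃) (add_ne_zero_of_ne h23) ?_,
          coefC_zero_of_ne f X₂ (X₁ + X₃) (add_ne_zero_of_ne h13) ?_,
          coefC_zero_of_ne f X₃ (X₁ + X₂) (add_ne_zero_of_ne h12) ?_⟩ <;>
  · intro q
    rw [hf q, dotp_comm, dotp_add]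
    generalize dotp q X₁ = a
    generalize dotp q X₂ = b
    generalize dotp q X₃ = c
    revert a b c; decide
end

section
/- (Triangle example) Let X₁, X₂, X₃ be a linearly independent family in 𝔽₂ⁿ and define f : 𝔽₂ⁿ → 𝔽₂ by the majority rule: f(q) is the value attained by at least two of q·X₁, q·X₂, q·X₃. Then C_{X₁}(f) = C_{X₂}(f) = C_{X₃}(f) = N/2 and C_{X₁+X₂+X₃}(f) = −N/2, where N = 2ⁿ; hence each of X₁, X₂, X₃, X₁⊕X₂⊕X₃ is output by the algorithm with probability exactly 1/4. -/
open Finset Matrix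

theorem card_filter_comp_mul_card_of_surjective {G H F : Type*} [AddGroup G] [Fintype G]
    [AddGroup H] [Fintype H] [DecidableEq H] [FunLike F G H] [AddMonoidHomClass F G H]
    (L : F) (hL : Function.Surjective L) (P : H → Prop) [DecidablePred P] :
    #{g | P (L g)} * Fintype.card H = Fintype.card G * #{h | P h} := by
  set K := #{g | L g = 0}
  have hfiber (h : H) : #{g | L g = h} = K :=
    AddMonoidHom.card_fiber_eq_of_mem_range L (hL h) (hL 0)
  have hG : Fintype.card G = Fintype.card H * K := by
    rw [← card_univ, card_eq_sum_card_fiberwise (f := L) (t := univ) fun _ _ => mem_univ _]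
    simp [hfiber]
  have hP : #{g | P (L g)} = #{h | P h} * K := by
    rw [card_eq_sum_card_fiberwise (f := L) (t := {h | P h}) fun _ => by simp, ← smul_eq_mul,
      ← sum_const]
    refine sum_congr rfl fun h hh => ?_
    rw [← hfiber h, filter_filter]
    congr 1; ext g
    simp only [mem_filter, mem_univ, true_and] at hh ⊢
    exact ⟨And.right, fun hg => ⟨hg ▸ hh, hg⟩⟩
  rw [hP, hG]; ring

theorem Matrix.mulVec_surjective_of_linearIndependent_row {K m n : Type*} [Field K] [Fintype m]
    [Fintype n] {M : Matrix m n K} (h : LinearIndependent K M.row) :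
    Function.Surjective M.mulVec := by
  rw [← coe_mulVecLin, ← LinearMap.range_eq_top]
  apply Submodule.eq_top_of_finrank_eq
  rw [Module.finrank_fintype_fun_eq_card, ← h.rank_matrix]
  rfl

theorem dotp_vecMul {m n : ℕ} (M : Matrix (Fin m) (Fin n) (ZMod 2)) (k : Fin m → ZMod 2)
    (q : Fin n → ZMod 2) :
    dotp (k ᵥ* M) q = dotp k (M *ᵥ q) :=
  (dotProduct_mulVec k M q).symm

theorem coefC_comp_mulVec {m n : ℕ} (M : Matrix (Fin m) (Fin n) (ZMod 2))
    (hM : Function.Surjective M.mulVec) (g : (Fin m → ZMod 2) → ZMod 2) (k : Fin m → ZMod 2) :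
    coefC (g ∘ M.mulVec) (k ᵥ* M) * 2 ^ m = 2 ^ n * coefC g k := by
  have hcard (P : (Fin m → ZMod 2) → Prop) [DecidablePred P] :
      (#{q | P (M *ᵥ q)} : ℤ) * 2 ^ m = 2 ^ n * #{x | P x} := by
    have := card_filter_comp_mul_card_of_surjective M.mulVecLin hM P
    simp only [Fintype.card_fun, ZMod.card, Fintype.card_fin] at this
    exact_mod_cast this
  simp only [coefC, dotp_vecMul, Function.comp_apply, sub_mul, mul_sub]
  rw [hcard (fun x => dotp k x = g x), hcard (fun x => dotp k x ≠ g x)]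

def majority (x : Fin 3 → ZMod 2) : ZMod 2 := x 0 * x 1 + x 1 * x 2 + x 2 * x 0

theorem eq_majority_of_agrees_with_two {a b c d : ZMod 2}
    (h : (d = a ∧ d = b) ∨ (d = a ∧ d = c) ∨ (d = b ∧ d = c)) :
    d = majority ![a, b, c] := by
  revert a b c d; decide

theorem coefC_majority :
    coefC majority ![1, 0, 0] = 4 ∧ coefC majority ![0, 1, 0] = 4 ∧
      coefC majority ![0, 0, 1] = 4 ∧ coefC majority ![1, 1, 1] = -4 := by
  decide

theorem sq_div_two_pow_eq_quarter {c : ℤ} {N : ℕ} (h : 2 * c = 2 ^ N ∨ 2 * c = -2 ^ N) :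
    ((c : ℚ) / 2 ^ N) ^ 2 = 1 / 4 := by
  have hℚ : (2 : ℚ) * c = 2 ^ N ∨ (2 : ℚ) * c = -2 ^ N := by exact_mod_cast h
  have hsq : ((2 : ℚ) * c) ^ 2 = (2 ^ N) ^ 2 := by rcases hℚ with h | h <;> simp [h]
  field_simp
  linear_combination hsq

/-- **Triangle example.** If `X₁, X₂, X₃` are linearly independent in `𝔽₂ⁿ` and `f(q)`
is the majority value among `q·X₁, q·X₂, q·X₃`, then
`C_{X₁}(f) = C_{X₂}(f) = C_{X₃}(f) = N/2` and `C_{X₁+X₂+X₃}(f) = −N/2` (with `N = 2ⁿ`),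
so each of the four outcomes `X₁, X₂, X₃, X₁⊕X₂⊕X₃` occurs with probability `1/4`. -/
theorem triangle_example {n : ℕ} (X₁ X₂ X₃ : Fin n → ZMod 2)
    (hX : LinearIndependent (ZMod 2) ![X₁, X₂, X₃])
    (f : (Fin n → ZMod 2) → ZMod 2)
    (hf : ∀ q, (f q = dotp q X₁ ∧ f q = dotp q X₂) ∨
               (f q = dotp q X₁ ∧ f q = dotp q X₃) ∨
               (f q = dotp q X₂ ∧ f q = dotp q X₃)) :
    (2 * coefC f X₁ = 2 ^ n ∧ 2 * coefC f X₂ = 2 ^ n ∧ 2 * coefC f X₃ = 2 ^ n ∧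
      2 * coefC f (X₁ + X₂ + X₃) = -(2 ^ n)) ∧
    (((coefC f X₁ : ℚ) / 2 ^ n) ^ 2 = 1 / 4 ∧
     ((coefC f X₂ : ℚ) / 2 ^ n) ^ 2 = 1 / 4 ∧
     ((coefC f X₃ : ℚ) / 2 ^ n) ^ 2 = 1 / 4 ∧
     ((coefC f (X₁ + X₂ + X₃) : ℚ) / 2 ^ n) ^ 2 = 1 / 4) := by
  set M : Matrix (Fin 3) (Fin n) (ZMod 2) := of ![X₁, X₂, X₃]
  have hf' : f = majority ∘ M.mulVec := by
    funext q
    rw [Function.comp_apply]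
    convert eq_majority_of_agrees_with_two (hf q) using 2
    ext i; fin_cases i <;> exact dotProduct_comm _ _
  have key (k : Fin 3 → ZMod 2) : coefC f (k ᵥ* M) * 2 ^ 3 = 2 ^ n * coefC majority k := by
    rw [hf']; exact coefC_comp_mulVec M (mulVec_surjective_of_linearIndependent_row hX) _ k
  obtain ⟨h₁, h₂, h₃, h₄⟩ := coefC_majority
  have k₁ := key ![1, 0, 0]
  have k₂ := key ![0, 1, 0]
  have k₃ := key ![0, 0, 1]
  have k₄ := key ![1, 1, 1]
  simp only [M, cons_vecMul_cons, empty_vecMul, one_smul, zero_smul, add_zero, zero_add,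
    ← add_assoc, h₁, h₂, h₃, h₄] at k₁ k₂ k₃ k₄
  have c₁ : 2 * coefC f X₁ = 2 ^ n := by linarith
  have c₂ : 2 * coefC f X₂ = 2 ^ n := by linarith
  have c₃ : 2 * coefC f X₃ = 2 ^ n := by linarith
  have c₄ : 2 * coefC f (X₁ + X₂ + X₃) = -2 ^ n := by linarith
  exact ⟨⟨c₁, c₂, c₃, c₄⟩, sq_div_two_pow_eq_quarter (.inl c₁),
    sq_div_two_pow_eq_quarter (.inl c₂), sq_div_two_pow_eq_quarter (.inl c₃),
    sq_div_two_pow_eq_quarter (.inr c₄)⟩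
end

section
/- (Tightness of the 1/k bound) Let G be an 𝔽₂-linear subspace of 𝔽₂ⁿ with |G| = k + 1 (so k + 1 is a power of 2 and k is odd), let X₁, …, X_k enumerate the nonzero elements of G, and define f : 𝔽₂ⁿ → 𝔽₂ by f(q) = 0 if q·x = 0 for all x ∈ G, and f(q) = 1 otherwise. Then f satisfies the majority promise with respect to X₁, …, X_k, for every i one has C_{Xᵢ}(f) = 2N/(k+1) where N = 2ⁿ, and consequently Σᵢ₌₁ᵏ C_{Xᵢ}(f)² = N² · 4k/(k+1)². -/
namespace Tight

/-- The sign character `(-1)^a`. -/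
def eps (a : ZMod 2) : ℤ := if a = 0 then 1 else -1

lemma eps_add (a b : ZMod 2) : eps (a + b) = eps a * eps b := by revert a b; decide

lemma eps_add_one (a : ZMod 2) : eps (a + 1) = - eps a := by revert a; decide

lemma eps_eq (a : ZMod 2) : eps a = 2 * (if a = 0 then (1 : ℤ) else 0) - 1 := by
  revert a; decide

lemma zmod2_ne_zero : ∀ a : ZMod 2, a ≠ 0 → a = 1 := by decide

lemma zmod2_ne_zero_iff : ∀ a : ZMod 2, a ≠ 0 ↔ a = 1 := by decide

lemma zmod2_add_eq_zero : ∀ a b : ZMod 2, (a + b = 0 ↔ a = b) := by decide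

lemma zmod2_add_self : ∀ a : ZMod 2, a + a = 0 := by decide

lemma dotp_comm {n : ℕ} (a b : Fin n → ZMod 2) : dotp a b = dotp b a := by
  simp [dotp, mul_comm]

lemma dotp_add_right {n : ℕ} (q a b : Fin n → ZMod 2) :
    dotp q (a + b) = dotp q a + dotp q b := by
  simp [dotp, mul_add, Finset.sum_add_distrib]

lemma dotp_add_left {n : ℕ} (a b q : Fin n → ZMod 2) :
    dotp (a + b) q = dotp a q + dotp b q := by
  simp [dotp, add_mul, Finset.sum_add_distrib]

lemma dotp_single_left {n : ℕ} (i : Fin n) (x : Fin n → ZMod 2) :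
    dotp (Pi.single i 1) x = x i := by
  simp [dotp, Pi.single_apply, ite_mul]

lemma dotp_zero_right {n : ℕ} (q : Fin n → ZMod 2) : dotp q 0 = 0 := by
  simp [dotp]

lemma sum_eps_filter {α : Type*} (s : Finset α) (g : α → ZMod 2) :
    ∑ x ∈ s, eps (g x) = 2 * ((s.filter fun x => g x = 0).card : ℤ) - s.card := by
  calc ∑ x ∈ s, eps (g x) = ∑ x ∈ s, (2 * (if g x = 0 then (1 : ℤ) else 0) - 1) :=
        Finset.sum_congr rfl fun x _ => eps_eq _
    _ = _ := by
        rw [Finset.sum_sub_distrib, ← Finset.mul_sum, Finset.sum_boole, Finset.sum_const]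
        simp

lemma pairing {n : ℕ} (s : Finset (Fin n → ZMod 2)) (g : (Fin n → ZMod 2) → ZMod 2)
    (hadd : ∀ a b, g (a + b) = g a + g b) (e : Fin n → ZMod 2) (he : g e = 1)
    (hs : ∀ x ∈ s, x + e ∈ s) : ∑ x ∈ s, eps (g x) = 0 := by
  have hee : ∀ x : Fin n → ZMod 2, x + e + e = x := by
    intro x; funext i
    show x i + e i + e i = x i
    rw [add_assoc, zmod2_add_self, add_zero]
  have key : ∑ x ∈ s, eps (g x) = ∑ x ∈ s, eps (g x + 1) := by
    refine Finset.sum_nbij' (fun x => x + e) (fun x => x + e) hs hs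
      (fun a _ => hee a) (fun a _ => hee a) ?_
    intro a _
    rw [hadd, he, eps_add_one, eps_add_one, neg_neg]
  have key2 : ∑ x ∈ s, eps (g x + 1) = - ∑ x ∈ s, eps (g x) := by
    rw [← Finset.sum_neg_distrib]
    exact Finset.sum_congr rfl fun x _ => eps_add_one _
  omega

end Tight

/-- **Tightness of the `1/k` bound.** Let `G ≤ 𝔽₂ⁿ` be a subspace with `|G| = k + 1`,
let `X₁, …, X_k` enumerate the nonzero elements of `G`, and let `f(q) = 0` iff
`q·x = 0` for all `x ∈ G` (and `f(q) = 1` otherwise; note `f` is `𝔽₂`-valued). Then `f` satisfies the majority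
promise, `C_{Xᵢ}(f) = 2N/(k+1)` for every `i`, and `Σᵢ C_{Xᵢ}(f)² = N² · 4k/(k+1)²`,
where `N = 2ⁿ`. -/
theorem tightness_one_over_k {n k : ℕ} (G : Submodule (ZMod 2) (Fin n → ZMod 2))
    (hG : Nat.card G = k + 1)
    (X : Fin k → (Fin n → ZMod 2)) (hXinj : Function.Injective X)
    (hXrange : Set.range X = (G : Set (Fin n → ZMod 2)) \ {0})
    (f : (Fin n → ZMod 2) → ZMod 2)
    (hf : ∀ q, f q = 0 ↔ ∀ x ∈ G, dotp q x = 0) :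
    (∀ q, k ≤ 2 * (Finset.univ.filter (fun i : Fin k => f q = dotp q (X i))).card) ∧
    (∀ i, (coefC f (X i) : ℚ) = 2 * 2 ^ n / (k + 1)) ∧
    ∑ i, (coefC f (X i) : ℚ) ^ 2 = ((2 ^ n : ℚ)) ^ 2 * (4 * k / (k + 1) ^ 2) := by
  classical
  open Tight in
  have hXG : ∀ i, X i ∈ G := by
    intro i
    have : X i ∈ Set.range X := Set.mem_range_self i
    rw [hXrange] at this
    exact this.1
  have hX0 : ∀ i, X i ≠ 0 := by
    intro i
    have : X i ∈ Set.range X := Set.mem_range_self i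
    rw [hXrange] at this
    simpa using this.2
  set GF : Finset (Fin n → ZMod 2) := Finset.univ.filter (· ∈ G) with hGFdef
  have hmemGF : ∀ x, x ∈ GF ↔ x ∈ G := by intro x; simp [hGFdef]
  have hGFcard : GF.card = k + 1 := by
    rw [← hG, Nat.card_eq_fintype_card, Fintype.card_subtype]
  set Hs : Finset (Fin n → ZMod 2) :=
    Finset.univ.filter (fun q => ∀ x ∈ G, dotp q x = 0) with hHsdef
  have hmemHs : ∀ q, q ∈ Hs ↔ ∀ x ∈ G, dotp q x = 0 := by intro q; simp [hHsdef]
  have hf0 : ∀ q ∈ Hs, f q = 0 := fun q hq => (hf q).2 ((hmemHs q).1 hq)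
  have hf1 : ∀ q ∉ Hs, f q = 1 := by
    intro q hq
    refine Tight.zmod2_ne_zero _ fun h => hq ((hmemHs q).2 ((hf q).1 h))
  have hcardfun : Fintype.card (Fin n → ZMod 2) = 2 ^ n := by simp
  -- half counts over the whole space
  have half1 : ∀ x : Fin n → ZMod 2, x ≠ 0 →
      ∑ q : Fin n → ZMod 2, Tight.eps (dotp q x) = 0 := by
    intro x hx
    obtain ⟨i, hi⟩ : ∃ i, x i ≠ 0 := by
      by_contra h
      push_neg at h
      exact hx (funext fun i => h i)
    refine Tight.pairing Finset.univ (fun q => dotp q x)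
      (fun a b => Tight.dotp_add_left a b x) (Pi.single i 1) ?_
      (fun _ _ => Finset.mem_univ _)
    show dotp (Pi.single i 1) x = 1
    rw [Tight.dotp_single_left]
    exact Tight.zmod2_ne_zero _ hi
  -- half counts over G
  have half2 : ∀ q, q ∉ Hs → ∑ x ∈ GF, Tight.eps (dotp q x) = 0 := by
    intro q hq
    rw [hmemHs q] at hq
    push_neg at hq
    obtain ⟨e, heG, he⟩ := hq
    refine Tight.pairing GF (fun x => dotp q x) (Tight.dotp_add_right q) e
      (Tight.zmod2_ne_zero _ he) ?_
    intro x hx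
    rw [hmemGF] at hx ⊢
    exact G.add_mem hx heG
  have hGsum : ∀ q, q ∈ Hs → ∑ x ∈ GF, Tight.eps (dotp q x) = (k + 1 : ℤ) := by
    intro q hq
    have : ∀ x ∈ GF, Tight.eps (dotp q x) = 1 := by
      intro x hx
      rw [(hmemHs q).1 hq x ((hmemGF x).1 hx)]
      rfl
    rw [Finset.sum_congr rfl this, Finset.sum_const, hGFcard]
    push_cast
    ring
  -- the double counting identity
  have hdouble : ((k : ℤ) + 1) * Hs.card = 2 ^ n := by
    have h1 : ∑ x ∈ GF, ∑ q : Fin n → ZMod 2, Tight.eps (dotp q x) = 2 ^ n := by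
      have hcongr : ∀ x ∈ GF, ∑ q : Fin n → ZMod 2, Tight.eps (dotp q x)
          = if x = 0 then (2 ^ n : ℤ) else 0 := by
        intro x _
        by_cases hx : x = 0
        · subst hx
          simp [Tight.dotp_zero_right, Tight.eps, hcardfun]
        · simp [hx, half1 x hx]
      rw [Finset.sum_congr rfl hcongr, Finset.sum_ite_eq' GF 0]
      have h0 : (0 : Fin n → ZMod 2) ∈ GF := (hmemGF 0).2 G.zero_mem
      simp [h0]
    have h2 : ∑ q : Fin n → ZMod 2, ∑ x ∈ GF, Tight.eps (dotp q x)
        = ((k : ℤ) + 1) * Hs.card := by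
      have hcongr : ∀ q ∈ Finset.univ, ∑ x ∈ GF, Tight.eps (dotp q x)
          = if q ∈ Hs then ((k : ℤ) + 1) else 0 := by
        intro q _
        by_cases hq : q ∈ Hs
        · simp [hq, hGsum q hq]
        · simp [hq, half2 q hq]
      rw [Finset.sum_congr rfl hcongr, Finset.sum_ite_mem, Finset.univ_inter,
        Finset.sum_const]
      push_cast
      ring
    rw [← h2, ← Finset.sum_comm, h1]
  -- the coefficient computation
  have hcoef : ∀ i, coefC f (X i) = 2 * (Hs.card : ℤ) := by
    intro i
    have hsum : coefC f (X i) = ∑ q : Fin n → ZMod 2, Tight.eps (dotp (X i) q + f q) := by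
      have : ∀ q : Fin n → ZMod 2, Tight.eps (dotp (X i) q + f q)
          = if dotp (X i) q = f q then (1 : ℤ) else -1 := by
        intro q
        by_cases h : dotp (X i) q = f q
        · rw [if_pos h, (Tight.zmod2_add_eq_zero _ _).2 h]; rfl
        · rw [if_neg h]
          have : dotp (X i) q + f q ≠ 0 := fun hc => h ((Tight.zmod2_add_eq_zero _ _).1 hc)
          simp [Tight.eps, this]
      rw [Finset.sum_congr rfl fun q _ => this q, Finset.sum_ite, Finset.sum_const,
        Finset.sum_const, coefC]
      push_cast
      ring_nf
    -- split the sum over Hs and its complement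
    have hsplit := Finset.sum_add_sum_compl Hs (fun q => Tight.eps (dotp (X i) q + f q))
    have hsplit2 := Finset.sum_add_sum_compl Hs (fun q => Tight.eps (dotp (X i) q))
    have e1 : ∑ q ∈ Hs, Tight.eps (dotp (X i) q + f q) = (Hs.card : ℤ) := by
      have : ∀ q ∈ Hs, Tight.eps (dotp (X i) q + f q) = 1 := by
        intro q hq
        rw [hf0 q hq, Tight.dotp_comm, (hmemHs q).1 hq (X i) (hXG i), add_zero]
        rfl
      rw [Finset.sum_congr rfl this, Finset.sum_const]
      simp
    have e3 : ∑ q ∈ Hs, Tight.eps (dotp (X i) q) = (Hs.card : ℤ) := by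
      have : ∀ q ∈ Hs, Tight.eps (dotp (X i) q) = 1 := by
        intro q hq
        rw [Tight.dotp_comm, (hmemHs q).1 hq (X i) (hXG i)]
        rfl
      rw [Finset.sum_congr rfl this, Finset.sum_const]
      simp
    have e2 : ∑ q ∈ Hsᶜ, Tight.eps (dotp (X i) q + f q)
        = - ∑ q ∈ Hsᶜ, Tight.eps (dotp (X i) q) := by
      rw [← Finset.sum_neg_distrib]
      refine Finset.sum_congr rfl fun q hq => ?_
      rw [hf1 q (Finset.mem_compl.1 hq), Tight.eps_add_one]
    have e4 : ∑ q : Fin n → ZMod 2, Tight.eps (dotp (X i) q) = 0 := by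
      have hex : ∃ e : Fin n → ZMod 2, dotp (X i) e = 1 := by
        by_contra h
        push_neg at h
        refine hX0 i (funext fun j => ?_)
        show X i j = 0
        have h2 := h (Pi.single j 1)
        rw [Tight.dotp_comm, Tight.dotp_single_left] at h2
        revert h2
        generalize X i j = a
        revert a
        decide
      obtain ⟨e, he⟩ := hex
      exact Tight.pairing Finset.univ (fun q => dotp (X i) q)
        (Tight.dotp_add_right (X i)) e he (fun _ _ => Finset.mem_univ _)
    rw [hsum, ← hsplit, e1, e2]
    rw [← hsplit2, e3] at e4
    omega
  -- rational versions
  have hk1 : ((k : ℚ) + 1) ≠ 0 := by positivity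
  have hdoubleQ : ((k : ℚ) + 1) * Hs.card = 2 ^ n := by exact_mod_cast hdouble
  have hcoefQ : ∀ i, (coefC f (X i) : ℚ) = 2 * 2 ^ n / (k + 1) := by
    intro i
    rw [hcoef i]
    push_cast
    rw [← hdoubleQ]
    field_simp
  refine ⟨?_, hcoefQ, ?_⟩
  · -- the majority promise
    intro q
    by_cases hq : q ∈ Hs
    · have : Finset.univ.filter (fun i : Fin k => f q = dotp q (X i)) = Finset.univ := by
        refine Finset.filter_true_of_mem fun i _ => ?_
        rw [hf0 q hq, (hmemHs q).1 hq (X i) (hXG i)]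
      rw [this, Finset.card_univ, Fintype.card_fin]
      omega
    · -- q outside H: exactly (k+1)/2 agreements
      have hzero : 2 * ((GF.filter fun x => dotp q x = 0).card : ℤ) = (k : ℤ) + 1 := by
        have := Tight.sum_eps_filter GF (fun x => dotp q x)
        rw [half2 q hq, hGFcard] at this
        push_cast at this
        omega
      have hone : 2 * ((GF.filter fun x => dotp q x = 1).card : ℤ) = (k : ℤ) + 1 := by
        have hsplit := Finset.card_filter_add_card_filter_not
          (s := GF) (p := fun x => dotp q x = 0)
        have hcongr : GF.filter (fun x => ¬ dotp q x = 0)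
            = GF.filter (fun x => dotp q x = 1) := by
          refine Finset.filter_congr fun x _ => ?_
          exact Tight.zmod2_ne_zero_iff _
        rw [hcongr, hGFcard] at hsplit
        omega
      have hbij : (Finset.univ.filter (fun i : Fin k => f q = dotp q (X i))).card
          = (GF.filter fun x => dotp q x = 1).card := by
        refine Finset.card_bij (fun i _ => X i) ?_ ?_ ?_
        · intro i hi
          rw [Finset.mem_filter] at hi ⊢
          refine ⟨(hmemGF _).2 (hXG i), ?_⟩
          rw [← hi.2, hf1 q hq]
        · intro a ha b hb hab
          exact hXinj hab
        · intro x hx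
          rw [Finset.mem_filter] at hx
          have hxG : x ∈ G := (hmemGF x).1 hx.1
          have hxne : x ≠ 0 := by
            intro h0
            rw [h0, Tight.dotp_zero_right] at hx
            exact absurd hx.2 (by decide)
          have : x ∈ Set.range X := by
            rw [hXrange]
            exact ⟨hxG, by simpa using hxne⟩
          obtain ⟨i, hi⟩ := this
          refine ⟨i, Finset.mem_filter.2 ⟨Finset.mem_univ i, ?_⟩, hi⟩
          rw [hf1 q hq, hi, hx.2]
      rw [hbij]
      omega
  · -- the sum of squares
    rw [Finset.sum_congr rfl fun i _ => by rw [hcoefQ i]]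
    rw [Finset.sum_const, Finset.card_univ, Fintype.card_fin, nsmul_eq_mul]
    field_simp
    ring
end
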